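/- arXiv:1707.04452 — 2 statements merged into one kernel-verified Lean document; each statement's English description precedes it below -/
import Mathlib

section
/- Every ring of diamonds admits a 2-bisection. -/
open SimpleGraph Finset

/-- The subgraph of `G` consisting of edges whose endpoints receive the same
colour under the 2-colouring `c`. Its connected components are the
monochromatic components of the colouring. -/
def monoSubgraph {V : Type*} (G : SimpleGraph V) (c : V → Bool) : SimpleGraph V where
  Adj u v := G.Adj u v ∧ c u = c v
  symm := ⟨fun u v h => ⟨h.1.symm, h.2.symm⟩⟩
  loopless := ⟨fun v h => G.irrefl h.1⟩

/-- `c` is a `k`-bisection of `G`: the two colour classes have the same size and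
every monochromatic component has at most `k` vertices. -/
def IsKBisection {V : Type*} (G : SimpleGraph V) (c : V → Bool) (k : ℕ) : Prop :=
  {v | c v = true}.ncard = {v | c v = false}.ncard ∧
    ∀ v : V, {w | (monoSubgraph G c).Reachable v w}.ncard ≤ k

/-- `G` is cubic: every vertex has degree 3. -/
def IsCubic {V : Type*} (G : SimpleGraph V) : Prop :=
  ∀ v : V, (G.neighborSet v).ncard = 3

/-- `G` is bridgeless: no edge is a cut-edge. -/
def Bridgeless {V : Type*} (G : SimpleGraph V) : Prop :=
  ∀ e ∈ G.edgeSet, ¬ G.IsBridge e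

/-- `G` is claw-free: no induced subgraph isomorphic to `K_{1,3}`. -/
def ClawFree {V : Type*} (G : SimpleGraph V) : Prop :=
  ¬ ∃ v a b c : V, a ≠ b ∧ a ≠ c ∧ b ≠ c ∧
    G.Adj v a ∧ G.Adj v b ∧ G.Adj v c ∧ ¬ G.Adj a b ∧ ¬ G.Adj a c ∧ ¬ G.Adj b c

/-- The diamond graph `K₄ - e` on `Fin 4`, with non-adjacent (degree-2)
vertices `0` and `1` and adjacent (degree-3) vertices `2` and `3`. -/
def diamondGraph : SimpleGraph (Fin 4) :=
  SimpleGraph.fromEdgeSet {s(0, 2), s(0, 3), s(1, 2), s(1, 3), s(2, 3)}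

/-- `f` realises the diamond graph as an induced subgraph of `G`. -/
def IsInducedDiamond {V : Type*} (G : SimpleGraph V) (f : Fin 4 → V) : Prop :=
  Function.Injective f ∧ ∀ i j, G.Adj (f i) (f j) ↔ diamondGraph.Adj i j

/-- One direction of the adjacency in a ring of `k` diamonds: either two
vertices of the same diamond adjacent within the diamond, or the edge from the
degree-2 vertex `1` of diamond `i` to the degree-2 vertex `0` of diamond `i+1`
(cyclically). -/
def ringRel (k : ℕ) (x y : Fin k × Fin 4) : Prop :=
  (x.1 = y.1 ∧ diamondGraph.Adj x.2 y.2) ∨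
    (y.1.val = (x.1.val + 1) % k ∧ x.2 = 1 ∧ y.2 = 0)

/-- The ring of `k` diamonds. -/
def ringOfDiamonds (k : ℕ) : SimpleGraph (Fin k × Fin 4) where
  Adj x y := x ≠ y ∧ (ringRel k x y ∨ ringRel k y x)
  symm := ⟨fun x y h => ⟨h.1.symm, h.2.symm⟩⟩
  loopless := ⟨fun x h => h.1 rfl⟩

/-!
Colour vertices `0, 2` of every diamond `true` and `1, 3` `false`. The edges joining consecutive
diamonds run between vertices `1` and `0`, so they are bichromatic, and the only monochromatic
edges are `02` and `13` inside a diamond: every monochromatic component is such a pair.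
Shifting the vertex index within each diamond by one swaps the two colour classes.
-/

namespace SimpleGraph

variable {V : Type*} {H : SimpleGraph V} {σ : V → V}

lemma Reachable.eq_or_eq_of_forall_adj_eq (hσ : Function.Involutive σ)
    (hadj : ∀ x y, H.Adj x y → y = σ x) {v w : V} (h : H.Reachable v w) :
    w = v ∨ w = σ v := by
  obtain ⟨p⟩ := h
  induction p with
  | nil => exact Or.inl rfl
  | cons hxy _ ih =>
    rw [hadj _ _ hxy, hσ] at ih
    exact ih.symm

lemma ncard_reachable_le_two_of_forall_adj_eq (hσ : Function.Involutive σ)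
    (hadj : ∀ x y, H.Adj x y → y = σ x) (v : V) :
    {w | H.Reachable v w}.ncard ≤ 2 := by
  have hsub : {w | H.Reachable v w} ⊆ {v, σ v} := fun w h =>
    h.eq_or_eq_of_forall_adj_eq hσ hadj
  calc {w | H.Reachable v w}.ncard ≤ ({v, σ v} : Set V).ncard :=
        Set.ncard_le_ncard hsub (Set.toFinite _)
    _ ≤ 2 := (Set.ncard_insert_le _ _).trans (by rw [Set.ncard_singleton])

end SimpleGraph

lemma ncard_true_eq_ncard_false_of_equiv {V : Type*} (c : V → Bool) (e : V ≃ V)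
    (he : ∀ x, c (e x) = !c x) :
    {v | c v = true}.ncard = {v | c v = false}.ncard := by
  have hpre : {v | c v = true} = e ⁻¹' {v | c v = false} := by
    ext x
    simp [he]
  rw [hpre, Set.ncard_preimage_of_injective_subset_range e.injective (by simp)]

namespace RingOfDiamonds

def vertexColour : Fin 4 → Bool := ![true, false, true, false]

def colour {k : ℕ} (x : Fin k × Fin 4) : Bool := vertexColour x.2

def partner {k : ℕ} (x : Fin k × Fin 4) : Fin k × Fin 4 := (x.1, x.2 + 2)

def shift (k : ℕ) : Fin k × Fin 4 ≃ Fin k × Fin 4 :=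
  Equiv.prodCongr (Equiv.refl _) (Equiv.addRight 1)

lemma add_two_add_two : ∀ a : Fin 4, a + 2 + 2 = a := by decide

lemma vertexColour_add_one : ∀ a : Fin 4, vertexColour (a + 1) = !vertexColour a := by decide

lemma eq_add_two_of_diamondGraph_adj_of_vertexColour_eq :
    ∀ a b : Fin 4, diamondGraph.Adj a b → vertexColour a = vertexColour b → b = a + 2 := by
  simp only [diamondGraph, fromEdgeSet_adj]
  decide

lemma partner_involutive (k : ℕ) : Function.Involutive (partner (k := k)) := fun x =>
  Prod.ext rfl (add_two_add_two x.2)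

lemma colour_shift {k : ℕ} (x : Fin k × Fin 4) : colour (shift k x) = !colour x :=
  vertexColour_add_one x.2

lemma eq_partner_of_monoSubgraph_adj {k : ℕ} {x y : Fin k × Fin 4}
    (h : (monoSubgraph (ringOfDiamonds k) colour).Adj x y) : y = partner x := by
  obtain ⟨⟨-, hadj⟩, hc⟩ := h
  rcases hadj with (⟨hsame, hxy⟩ | ⟨-, hx, hy⟩) | (⟨hsame, hyx⟩ | ⟨-, hy, hx⟩)
  · exact Prod.ext hsame.symm (eq_add_two_of_diamondGraph_adj_of_vertexColour_eq _ _ hxy hc)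
  · simp [colour, vertexColour, hx, hy] at hc
  · have hx := eq_add_two_of_diamondGraph_adj_of_vertexColour_eq _ _ hyx hc.symm
    exact Prod.ext hsame (by rw [partner, hx, add_two_add_two])
  · simp [colour, vertexColour, hx, hy] at hc

end RingOfDiamonds

theorem ringOfDiamonds_two_bisection_general (k : ℕ) :
    ∃ c : Fin k × Fin 4 → Bool, IsKBisection (ringOfDiamonds k) c 2 :=
  ⟨RingOfDiamonds.colour,
    ncard_true_eq_ncard_false_of_equiv _ (RingOfDiamonds.shift k) RingOfDiamonds.colour_shift,
    ncard_reachable_le_two_of_forall_adj_eq (RingOfDiamonds.partner_involutive k)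
      fun _ _ => RingOfDiamonds.eq_partner_of_monoSubgraph_adj⟩

/-- Every ring of diamonds admits a 2-bisection. -/
theorem ringOfDiamonds_two_bisection (k : ℕ) (hk : 2 ≤ k) :
    ∃ c : Fin k × Fin 4 → Bool, IsKBisection (ringOfDiamonds k) c 2 :=
  ringOfDiamonds_two_bisection_general k
end

section
/- In the 2-colouring of H△ constructed from a perfect matching M of H by alternately colouring each even circuit C'_i (of length 2|C_i|, arising from the 2-factor complement of M) and colouring the two ends of every matching edge in M' with different colours, every monochromatic component has at most 2 vertices and the two colour classes have equal size; hence this colouring is a 2-bisection of H△. -/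
open SimpleGraph Finset

/- Multigraph machinery: a multigraph is given by an edge-indexed family of
(arbitrarily oriented) endpoint pairs `ends : E → V × V`.  A *dart* is a pair
`(e, i) : E × Fin 2`, a half-edge of `e`; loops contribute two darts at the
same vertex, so degrees are counted correctly. -/

/-- The vertex at which the dart `d` is based. -/
def dartVert {V E : Type*} (ends : E → V × V) (d : E × Fin 2) : V :=
  if d.2 = 0 then (ends d.1).1 else (ends d.1).2

/-- The multigraph is cubic: every vertex carries exactly 3 darts. -/
def MCubic {V E : Type*} (ends : E → V × V) : Prop :=
  ∀ v : V, {d : E × Fin 2 | dartVert ends d = v}.ncard = 3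

/-- Reachability in the multigraph using only edges from `S`. -/
def MReach {V E : Type*} (ends : E → V × V) (S : Set E) : V → V → Prop :=
  Relation.ReflTransGen (fun u v => ∃ e ∈ S, ends e = (u, v) ∨ ends e = (v, u))

/-- The multigraph is bridgeless: deleting any single edge does not destroy
reachability between any two vertices. -/
def MBridgeless {V E : Type*} (ends : E → V × V) : Prop :=
  ∀ e₀ : E, ∀ u v : V, MReach ends Set.univ u v → MReach ends {e | e ≠ e₀} u v

/-- The truncation `H△` of the multigraph: each vertex is replaced by a triangle
on its darts; two darts are adjacent iff they are based at the same vertex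
(triangle edges) or are the two darts of one edge of `H`. -/
def truncation {V E : Type*} (ends : E → V × V) : SimpleGraph (E × Fin 2) where
  Adj d d' := d ≠ d' ∧ (dartVert ends d = dartVert ends d' ∨ d.1 = d'.1)
  symm := ⟨fun d d' h => ⟨h.1.symm, h.2.imp Eq.symm Eq.symm⟩⟩
  loopless := ⟨fun d h => h.1 rfl⟩

/-- `M` is a perfect matching of the multigraph: every vertex carries exactly
one dart of an edge of `M`. -/
def MPerfectMatching {V E : Type*} (ends : E → V × V) (M : Set E) : Prop :=
  ∀ v : V, {d : E × Fin 2 | d.1 ∈ M ∧ dartVert ends d = v}.ncard = 1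

/-
The two darts of every edge of `H` get different colours (by `hM'` on matching edges, by
alternation on the others), and so do the two non-matching darts of each triangle.  Hence a
monochromatic edge of `H△` lies in a triangle and joins its matching dart to a non-matching
one, and since the two non-matching darts differ in colour, every dart has at most one
neighbour of its own colour: monochromatic components have at most two vertices.  Swapping
the two darts of each edge exchanges the colour classes, so they have equal size.
-/

namespace SimpleGraph

variable {α : Type*} {G : SimpleGraph α}

theorem Reachable.eq_or_adj_of_subsingleton_neighborSet
    (hG : ∀ v, (G.neighborSet v).Subsingleton) {v w : α} (h : G.Reachable v w) :
    w = v ∨ G.Adj v w := by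
  obtain ⟨p⟩ := h
  suffices ∀ {a b} (_ : G.Walk a b), (a = v ∨ G.Adj v a) → b = v ∨ G.Adj v b from
    this p (Or.inl rfl)
  intro a b p
  induction p with
  | nil => exact id
  | @cons a x b hax _ ih =>
    rintro (rfl | hva)
    · exact ih (Or.inr hax)
    · exact ih (Or.inl (hG a hax hva.symm))

theorem ncard_setOf_reachable_le_two (hG : ∀ v, (G.neighborSet v).Subsingleton) (v : α) :
    {w | G.Reachable v w}.ncard ≤ 2 := by
  have hsub : {w | G.Reachable v w} ⊆ insert v (G.neighborSet v) := fun w hw =>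
    (hw.eq_or_adj_of_subsingleton_neighborSet hG).imp id id
  calc {w | G.Reachable v w}.ncard
      ≤ (insert v (G.neighborSet v)).ncard :=
        Set.ncard_le_ncard hsub ((hG v).finite.insert v)
    _ ≤ (G.neighborSet v).ncard + 1 := Set.ncard_insert_le _ _
    _ ≤ 1 + 1 := by gcongr; exact (Set.ncard_le_one (hG v).finite).2 (hG v)

end SimpleGraph

theorem Set.ncard_setOf_eq_true_eq_of_involutive {α : Type*} {c : α → Bool} {σ : α → α}
    (hσ : Function.Involutive σ) (hc : ∀ a, c (σ a) ≠ c a) :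
    {a | c a = true}.ncard = {a | c a = false}.ncard := by
  have himage : σ '' {a | c a = true} = {a | c a = false} := by
    rw [hσ.image_eq_preimage_symm]
    ext a
    have := hc a
    cases h : c a <;> simp_all
  rw [← himage, Set.ncard_image_of_injective _ hσ.injective]

section Truncation

variable {V E : Type*} {ends : E → V × V}

def MMatching (ends : E → V × V) (M : Set E) : Prop :=
  ∀ v, {d : E × Fin 2 | d.1 ∈ M ∧ dartVert ends d = v}.Subsingleton

theorem MPerfectMatching.mMatching {M : Set E} (hM : MPerfectMatching ends M) :
    MMatching ends M := by
  intro v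
  obtain ⟨a, ha⟩ := Set.ncard_eq_one.1 (hM v)
  exact ha ▸ Set.subsingleton_singleton

def dartRev (d : E × Fin 2) : E × Fin 2 := (d.1, d.2.rev)

theorem dartRev_involutive : Function.Involutive (dartRev : E × Fin 2 → E × Fin 2) := by
  intro d
  simp [dartRev]

theorem truncation_adj_dartRev (d : E × Fin 2) : (truncation ends).Adj d (dartRev d) := by
  refine ⟨fun h => ?_, Or.inr rfl⟩
  obtain ⟨e, i⟩ := d
  fin_cases i <;> simp [dartRev, Prod.ext_iff] at h

theorem eq_of_mem_matching_of_dartVert_eq {M : Set E}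
    (hM : MMatching ends M)
    {d d' : E × Fin 2} (hd : d.1 ∈ M) (hd' : d'.1 ∈ M)
    (hv : dartVert ends d = dartVert ends d') : d = d' :=
  hM (dartVert ends d) ⟨hd, rfl⟩ ⟨hd', hv.symm⟩

variable {M : Set E} {c : E × Fin 2 → Bool}

theorem colour_dartRev_ne (hM' : ∀ e ∈ M, c (e, 0) ≠ c (e, 1))
    (halt : ∀ d d' : E × Fin 2, (truncation ends).Adj d d' →
      d.1 ∉ M → d'.1 ∉ M → c d ≠ c d') (d : E × Fin 2) :
    c (dartRev d) ≠ c d := by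
  by_cases hd : d.1 ∈ M
  · obtain ⟨e, i⟩ := d
    fin_cases i
    exacts [(hM' e hd).symm, hM' e hd]
  · exact (halt d _ (truncation_adj_dartRev d) hd hd).symm

theorem dartVert_eq_and_mem_iff_of_monoSubgraph_adj
    (hM : MMatching ends M)
    (hrev : ∀ d, c (dartRev d) ≠ c d)
    (halt : ∀ d d' : E × Fin 2, (truncation ends).Adj d d' →
      d.1 ∉ M → d'.1 ∉ M → c d ≠ c d')
    {d x : E × Fin 2} (h : (monoSubgraph (truncation ends) c).Adj d x) :
    dartVert ends d = dartVert ends x ∧ (d.1 ∈ M ↔ x.1 ∉ M) := by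
  obtain ⟨⟨hne, hvert | hedge⟩, hc⟩ := h
  · refine ⟨hvert, ⟨fun hd hx => hne ?_, fun hx => ?_⟩⟩
    · exact eq_of_mem_matching_of_dartVert_eq hM hd hx hvert
    · by_contra hd
      exact halt d x ⟨hne, Or.inl hvert⟩ hd hx hc
  · have hx : x = dartRev d := by
      obtain ⟨e, i⟩ := d
      obtain ⟨f, j⟩ := x
      obtain rfl : e = f := hedge
      fin_cases i <;> fin_cases j <;> simp_all [dartRev]
    exact absurd hc.symm (hx ▸ hrev d)

theorem monoSubgraph_truncation_neighborSet_subsingleton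
    (hM : MMatching ends M)
    (hrev : ∀ d, c (dartRev d) ≠ c d)
    (halt : ∀ d d' : E × Fin 2, (truncation ends).Adj d d' →
      d.1 ∉ M → d'.1 ∉ M → c d ≠ c d')
    (d : E × Fin 2) : ((monoSubgraph (truncation ends) c).neighborSet d).Subsingleton := by
  intro x hx y hy
  obtain ⟨hvx, hMx⟩ := dartVert_eq_and_mem_iff_of_monoSubgraph_adj hM hrev halt hx
  obtain ⟨hvy, hMy⟩ := dartVert_eq_and_mem_iff_of_monoSubgraph_adj hM hrev halt hy
  by_cases hd : d.1 ∈ M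
  · by_contra hxy
    exact halt x y ⟨hxy, Or.inl (hvx.symm.trans hvy)⟩ (hMx.1 hd) (hMy.1 hd)
      (hx.2.symm.trans hy.2)
  · exact eq_of_mem_matching_of_dartVert_eq hM (not_not.1 (mt hMx.2 hd))
      (not_not.1 (mt hMy.2 hd)) (hvx.symm.trans hvy)

end Truncation

/-- `halt` says that the circuits `C'_i`, whose edges are those of `H△` between darts of
non-matching edges, are coloured alternately. -/
theorem matching_colouring_is_two_bisection_general {V E : Type*}
    (ends : E → V × V)
    (M : Set E) (hM : MPerfectMatching ends M) (c : E × Fin 2 → Bool)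
    (hM' : ∀ e ∈ M, c (e, 0) ≠ c (e, 1))
    (halt : ∀ d d' : E × Fin 2, (truncation ends).Adj d d' →
      d.1 ∉ M → d'.1 ∉ M → c d ≠ c d') :
    IsKBisection (truncation ends) c 2 := by
  have hrev := colour_dartRev_ne hM' halt
  exact ⟨Set.ncard_setOf_eq_true_eq_of_involutive dartRev_involutive hrev,
    SimpleGraph.ncard_setOf_reachable_le_two
      (monoSubgraph_truncation_neighborSet_subsingleton hM.mMatching hrev halt)⟩

/-- The colouring of the truncation `H△` of a bridgeless cubic multigraph `H`
built from a perfect matching `M`: each even circuit of the complement of `M'`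
is coloured alternately (equivalently, any two adjacent darts of non-matching
edges get different colours) and the two ends of each edge of `M'` get
different colours.  Any such colouring is a 2-bisection of `H△`. -/
theorem matching_colouring_is_two_bisection {V E : Type*} [Fintype V] [Fintype E]
    (ends : E → V × V) (hcubic : MCubic ends) (hbridgeless : MBridgeless ends)
    (M : Set E) (hM : MPerfectMatching ends M) (c : E × Fin 2 → Bool)
    (hM' : ∀ e ∈ M, c (e, 0) ≠ c (e, 1))
    (halt : ∀ d d' : E × Fin 2, (truncation ends).Adj d d' →
      d.1 ∉ M → d'.1 ∉ M → c d ≠ c d') :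
    IsKBisection (truncation ends) c 2 :=
  matching_colouring_is_two_bisection_general ends M hM c hM' halt
end
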